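/- Let λ be a partition of 2p in which every odd part occurs with even multiplicity, and assume λ has distinct column lengths; let 0 = k_0 < k_1 < ⋯ < k_m be the column lengths of λ listed increasingly. Then the number of connected components of Γ_CI(λ;p,p) equals #syd_CI(λ;p,p) (the graph has no edges) and equals ∏_{1 ≤ s ≤ m, λ_{k_s} even} (1 + k_s − k_{s−1}). -/

import Mathlib

open Finset

/-- A partition of `n`, given by the function `l` listing its parts in weakly
decreasing order: `l j = λ_j` is the `j`-th part for `1 ≤ j ≤ len`, and
`l j = 0` for `j > len`. -/
structure PartitionData : Type where
  l : ℕ → ℕ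
  len : ℕ
  anti : ∀ j, 1 ≤ j → l (j + 1) ≤ l j
  pos : ∀ j, 1 ≤ j → (0 < l j ↔ j ≤ len)

namespace PartitionData

/-- The multiplicity `m(i)` of `i` as a part of the partition. -/
def mult (P : PartitionData) (i : ℕ) : ℕ :=
  ((Finset.Icc 1 P.len).filter (fun j => P.l j = i)).card

/-- The finite set of (distinct) parts of the partition. -/
def partsSet (P : PartitionData) : Finset ℕ :=
  (Finset.Icc 1 P.len).image P.l

/-- The sum of the parts (i.e. the number `n` the partition partitions). -/
def boxSum (P : PartitionData) : ℕ := ∑ j ∈ Finset.Icc 1 P.len, P.l j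

/-- The number of odd parts of the partition. -/
def oddCount (P : PartitionData) : ℕ :=
  ((Finset.Icc 1 P.len).filter (fun j => Odd (P.l j))).card

end PartitionData

/-- A signed Young diagram of shape `P` and signature `(p, q)`, encoded by the
function `f` sending each part length `i` to `m_T⁺(i)`, the number of rows of
length `i` whose leading sign is `+`.  A row of length `i` with leading sign
`+` has `(i+1)/2` plus-boxes and `i/2` minus-boxes, and vice versa. -/
structure SYD (P : PartitionData) (p q : ℕ) : Type where
  f : ℕ → ℕ
  le_mult : ∀ i, f i ≤ P.mult i
  plus_eq : ∑ i ∈ P.partsSet, (f i * ((i + 1) / 2) + (P.mult i - f i) * (i / 2)) = p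
  minus_eq : ∑ i ∈ P.partsSet, (f i * (i / 2) + (P.mult i - f i) * ((i + 1) / 2)) = q

/-- `i` and `j` are consecutive distinct parts: `i > j` with no part strictly
in between (so if the distinct parts are `i_1 > ⋯ > i_k`, the pairs are
`(i_r, i_{r+1})`). -/
def Consec (P : PartitionData) (i j : ℕ) : Prop :=
  i ∈ P.partsSet ∧ j ∈ P.partsSet ∧ j < i ∧ ∀ x ∈ P.partsSet, ¬ (j < x ∧ x < i)

/-- `j` is the smallest part `i_k`. -/
def IsMinPart (P : PartitionData) (j : ℕ) : Prop :=
  j ∈ P.partsSet ∧ ∀ x ∈ P.partsSet, j ≤ x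

/-- Adjacency of signed Young diagrams with step `c`:
`π(T) - π(T') ∈ {±c(e_r - e_{r+1})} ∪ {±c e_k}` in the coordinates indexed by
the distinct parts `i_1 > ⋯ > i_k`. -/
def AdjRel (P : PartitionData) {p q : ℕ} (c : ℕ) (T T' : SYD P p q) : Prop :=
  (∃ i j, Consec P i j ∧ (∀ x, x ≠ i → x ≠ j → T.f x = T'.f x) ∧
    ((T.f i = T'.f i + c ∧ T'.f j = T.f j + c) ∨
      (T'.f i = T.f i + c ∧ T.f j = T'.f j + c)))
  ∨ (∃ j, IsMinPart P j ∧ (∀ x, x ≠ j → T.f x = T'.f x) ∧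
      (T.f j = T'.f j + c ∨ T'.f j = T.f j + c))

/-- The orbit graph `Γ(λ;p,q)` (type AIII). -/
def orbitGraph (P : PartitionData) (p q : ℕ) : SimpleGraph (SYD P p q) :=
  SimpleGraph.fromRel (AdjRel P 1)

/-- Type BDI: `m_T⁺(i) = m(i)/2` for every even part length `i`. -/
def SYD.IsBDI {P : PartitionData} {p q : ℕ} (T : SYD P p q) : Prop :=
  ∀ i, Even i → 2 * T.f i = P.mult i

/-- Type CI: `p = q` and `m_T⁺(i) = m(i)/2` for every odd part length `i`. -/
def SYD.IsCI {P : PartitionData} {p q : ℕ} (T : SYD P p q) : Prop :=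
  p = q ∧ ∀ i, Odd i → 2 * T.f i = P.mult i

/-- Type CII: `p`, `q` even, `m_T⁺(i) = m(i)/2` for every even part length `i`,
and `m(i)`, `m_T⁺(i)` even for every odd part length `i`. -/
def SYD.IsCII {P : PartitionData} {p q : ℕ} (T : SYD P p q) : Prop :=
  Even p ∧ Even q ∧ (∀ i, Even i → 2 * T.f i = P.mult i) ∧
    ∀ i, Odd i → Even (P.mult i) ∧ Even (T.f i)

/-- Type DIII: `p = q`, `m_T⁺(i) = m(i)/2` for every odd part length `i`, and
`m(i)`, `m_T⁺(i)` even for every even part length `i`. -/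
def SYD.IsDIII {P : PartitionData} {p q : ℕ} (T : SYD P p q) : Prop :=
  p = q ∧ (∀ i, Odd i → 2 * T.f i = P.mult i) ∧
    ∀ i, Even i → Even (P.mult i) ∧ Even (T.f i)

/-- The orbit graph `Γ_X(λ;p,q)` on the vertices `syd_X(λ;p,q)` (given by the
predicate `Pr`), with step `c` (`c = 1` for X = BDI, CI and `c = 2` for
X = CII, DIII). -/
def orbitGraphX (P : PartitionData) (p q c : ℕ) (Pr : SYD P p q → Prop) :
    SimpleGraph {T : SYD P p q // Pr T} :=
  SimpleGraph.fromRel (fun T T' => AdjRel P c T.1 T'.1)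

/-- The set of column lengths of `λ`: those `h ≥ 1` with `λ_h - λ_{h+1} > 0`. -/
def colSet (P : PartitionData) : Finset ℕ :=
  (Finset.Icc 1 P.len).filter (fun h => P.l (h + 1) < P.l h)

/-!
Distinct column lengths force the distinct parts to be `λ₁, λ₁ - 1, …, 1`. A move of the orbit
graph changes `m_T⁺` at two consecutive parts or at the smallest part `1`, hence at an odd part,
where every CI diagram has `m_T⁺(i) = m(i)/2`; so the graph has no edges. On the other hand
`m_T⁺(i) ∈ [0, m(i)]` can be chosen freely at every even part `i`: rows of even length carry as
many `+` as `-`, and the rows of each odd length split evenly between the two leading signs, so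
the signature is automatically `(p, p)`. Finally the part `λ_{k_s}` fills exactly the rows
`k_{s-1} + 1, …, k_s`, so its multiplicity is `k_s - k_{s-1}`.
-/
namespace PartitionData

variable (P : PartitionData)

lemma l_antitoneOn : AntitoneOn P.l {j | 1 ≤ j} :=
  antitoneOn_nat_Ici_of_succ_le P.anti

variable {P}

lemma mem_partsSet {i : ℕ} : i ∈ P.partsSet ↔ ∃ j, 1 ≤ j ∧ j ≤ P.len ∧ P.l j = i := by
  simp only [partsSet, mem_image, mem_Icc, and_assoc]

lemma pos_of_mem_partsSet {i : ℕ} (h : i ∈ P.partsSet) : 0 < i := by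
  obtain ⟨j, h1, h2, rfl⟩ := mem_partsSet.mp h
  exact (P.pos j h1).mpr h2

lemma mult_eq_zero_of_notMem {i : ℕ} (h : i ∉ P.partsSet) : P.mult i = 0 := by
  rw [mult, card_eq_zero, filter_eq_empty_iff]
  rintro j hj rfl
  exact h (mem_image_of_mem _ hj)

variable (P)

lemma boxSum_eq_sum_mult_mul : P.boxSum = ∑ i ∈ P.partsSet, P.mult i * i := by
  simpa [boxSum, mult, partsSet, mul_comm] using sum_comp (s := Icc 1 P.len) (g := P.l) id

variable {P}

lemma mem_colSet {h : ℕ} : h ∈ colSet P ↔ 1 ≤ h ∧ h ≤ P.len ∧ P.l (h + 1) < P.l h := by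
  simp only [colSet, mem_filter, mem_Icc, and_assoc]

lemma l_lt_of_mem_colSet {h j : ℕ} (hh : h ∈ colSet P) (hj : h < j) : P.l j < P.l h := by
  obtain ⟨h1, -, hdrop⟩ := mem_colSet.mp hh
  exact (P.l_antitoneOn (show 1 ≤ h + 1 by omega) (show 1 ≤ j by omega) hj).trans_lt hdrop

lemma injOn_l_colSet : Set.InjOn P.l (colSet P) := by
  intro a ha b hb hab
  by_contra hne
  rcases Nat.lt_or_gt_of_ne hne with h | h
  · exact (l_lt_of_mem_colSet ha h).ne hab.symm
  · exact (l_lt_of_mem_colSet hb h).ne hab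

variable (P)

lemma image_l_colSet : (colSet P).image P.l = P.partsSet := by
  ext i
  refine ⟨fun hi => ?_, fun hi => ?_⟩
  · obtain ⟨h, hh, rfl⟩ := mem_image.mp hi
    obtain ⟨h1, hlen, -⟩ := mem_colSet.mp hh
    exact mem_partsSet.mpr ⟨h, h1, hlen, rfl⟩
  -- the last row of length `i` ends a column
  have hne : ((Icc 1 P.len).filter (P.l · = i)).Nonempty := by
    obtain ⟨j, h1, hlen, rfl⟩ := mem_partsSet.mp hi
    exact ⟨j, mem_filter.mpr ⟨mem_Icc.mpr ⟨h1, hlen⟩, rfl⟩⟩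
  obtain ⟨h, hmem, hmax⟩ := exists_max_image _ id hne
  obtain ⟨hIcc, hh⟩ := mem_filter.mp hmem
  rw [mem_Icc] at hIcc
  have hipos := pos_of_mem_partsSet hi
  have hnext : P.l (h + 1) ≠ i := by
    intro hnext
    have hlen : h + 1 ≤ P.len := (P.pos (h + 1) (by omega)).mp (by omega)
    have := hmax (h + 1) (mem_filter.mpr ⟨mem_Icc.mpr ⟨by omega, hlen⟩, hnext⟩)
    simp only [id] at this
    omega
  have := P.anti h hIcc.1
  exact mem_image.mpr ⟨h, mem_colSet.mpr ⟨hIcc.1, hIcc.2, by omega⟩, hh⟩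

lemma l_eq_of_forall_notMem_colSet {a b : ℕ} (ha : 1 ≤ a) (hab : a ≤ b) (hb : b ≤ P.len)
    (hcol : ∀ c, a ≤ c → c < b → c ∉ colSet P) : P.l b = P.l a := by
  induction b, hab using Nat.le_induction with
  | base => rfl
  | succ b hab ih =>
    have hb' : b ∉ colSet P := hcol b hab (by omega)
    rw [mem_colSet, not_and, not_and, not_lt] at hb'
    have := P.anti b (by omega)
    have := hb' (by omega) (by omega)
    rw [← ih (by omega) fun c hc hcb => hcol c hc (by omega)]
    omega

lemma sub_one_mem_partsSet (hdist : ∀ j, 1 ≤ j → P.l j - P.l (j + 1) ≤ 1) {i : ℕ}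
    (hi : i ∈ P.partsSet) (h2 : 2 ≤ i) : i - 1 ∈ P.partsSet := by
  rw [← image_l_colSet] at hi
  obtain ⟨h, hh, rfl⟩ := mem_image.mp hi
  obtain ⟨h1, -, hdrop⟩ := mem_colSet.mp hh
  have := hdist h h1
  exact mem_partsSet.mpr ⟨h + 1, by omega, (P.pos (h + 1) (by omega)).mp (by omega), by omega⟩

end PartitionData

open PartitionData

lemma Consec.eq_add_one {P : PartitionData} (hdist : ∀ j, 1 ≤ j → P.l j - P.l (j + 1) ≤ 1)
    {i j : ℕ} (h : Consec P i j) : i = j + 1 := by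
  obtain ⟨hi, -, hji, hbetween⟩ := h
  by_contra hne
  exact hbetween (i - 1) (P.sub_one_mem_partsSet hdist hi (by omega)) ⟨by omega, by omega⟩

lemma IsMinPart.eq_one {P : PartitionData} (hdist : ∀ j, 1 ≤ j → P.l j - P.l (j + 1) ≤ 1)
    {j : ℕ} (h : IsMinPart P j) : j = 1 := by
  obtain ⟨hj, hmin⟩ := h
  have := pos_of_mem_partsSet hj
  by_contra hne
  have := hmin (j - 1) (P.sub_one_mem_partsSet hdist hj (by omega))
  omega

lemma SimpleGraph.card_connectedComponent_bot (V : Type*) :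
    Nat.card (⊥ : SimpleGraph V).ConnectedComponent = Nat.card V :=
  (Nat.card_eq_of_bijective _
    ⟨fun _ _ h => reachable_bot.mp (ConnectedComponent.eq.mp h),
      fun C => C.exists_rep⟩).symm

namespace SYD

variable {P : PartitionData} {p q : ℕ}

@[ext]
lemma ext {T T' : SYD P p q} (h : T.f = T'.f) : T = T' := by
  cases T; cases T'; simp_all

lemma IsCI.f_eq_of_odd {T T' : SYD P p q} (hT : T.IsCI) (hT' : T'.IsCI) {i : ℕ} (hi : Odd i) :
    T.f i = T'.f i := by
  have := hT.2 i hi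
  have := hT'.2 i hi
  omega

lemma IsCI.not_adjRel (hdist : ∀ j, 1 ≤ j → P.l j - P.l (j + 1) ≤ 1) {c : ℕ} (hc : c ≠ 0)
    {T T' : SYD P p q} (hT : T.IsCI) (hT' : T'.IsCI) : ¬ AdjRel P c T T' := by
  have hodd {x : ℕ} (hx : Odd x) := hT.f_eq_of_odd hT' hx
  rintro (⟨i, j, hij, -, hmove⟩ | ⟨j, hj, -, hmove⟩)
  · obtain rfl := hij.eq_add_one hdist
    rcases Nat.even_or_odd j with hj | hj
    · have := hodd hj.add_one
      omega
    · have := hodd hj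
      omega
  · obtain rfl := hj.eq_one hdist
    have := hodd odd_one
    omega

end SYD

lemma orbitGraphX_isCI_eq_bot {P : PartitionData} {p q c : ℕ}
    (hdist : ∀ j, 1 ≤ j → P.l j - P.l (j + 1) ≤ 1) (hc : c ≠ 0) :
    orbitGraphX P p q c SYD.IsCI = ⊥ := by
  ext T T'
  simp only [orbitGraphX, SimpleGraph.fromRel_adj, SimpleGraph.bot_adj, iff_false, not_and,
    not_or]
  exact fun _ => ⟨T.2.not_adjRel hdist hc T'.2, T'.2.not_adjRel hdist hc T.2⟩

namespace PartitionData

variable (P : PartitionData)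

def plusCount (f : ℕ → ℕ) : ℕ :=
  ∑ i ∈ P.partsSet, (f i * ((i + 1) / 2) + (P.mult i - f i) * (i / 2))

def minusCount (f : ℕ → ℕ) : ℕ :=
  ∑ i ∈ P.partsSet, (f i * (i / 2) + (P.mult i - f i) * ((i + 1) / 2))

variable {P}

lemma plusCount_add_minusCount {f : ℕ → ℕ} (hf : ∀ i, f i ≤ P.mult i) :
    P.plusCount f + P.minusCount f = P.boxSum := by
  rw [plusCount, minusCount, ← sum_add_distrib, boxSum_eq_sum_mult_mul]
  refine sum_congr rfl fun i _ => ?_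
  obtain ⟨g, hg⟩ := Nat.exists_eq_add_of_le (hf i)
  rw [hg, Nat.add_sub_cancel_left]
  calc f i * ((i + 1) / 2) + g * (i / 2) + (f i * (i / 2) + g * ((i + 1) / 2))
      = (f i + g) * ((i + 1) / 2 + i / 2) := by ring
    _ = (f i + g) * i := by rw [show (i + 1) / 2 + i / 2 = i by omega]

lemma plusCount_eq_minusCount {f : ℕ → ℕ} (hodd : ∀ i, Odd i → 2 * f i = P.mult i) :
    P.plusCount f = P.minusCount f := by
  refine sum_congr rfl fun i _ => ?_
  rcases Nat.even_or_odd i with ⟨t, rfl⟩ | hi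
  · rw [show (t + t + 1) / 2 = (t + t) / 2 by omega]
  · rw [show P.mult i - f i = f i by have := hodd i hi; omega, add_comm]

def ciFun (g : (i : P.partsSet.filter Even) → Fin (P.mult i + 1)) (i : ℕ) : ℕ :=
  if h : i ∈ P.partsSet.filter Even then g ⟨i, h⟩ else P.mult i / 2

lemma ciFun_le_mult (g : (i : P.partsSet.filter Even) → Fin (P.mult i + 1)) (i : ℕ) :
    P.ciFun g i ≤ P.mult i := by
  unfold ciFun
  split
  · exact Nat.lt_succ_iff.mp (g _).isLt
  · exact Nat.div_le_self _ _

lemma two_mul_ciFun_of_odd (hmult : ∀ i, Odd i → Even (P.mult i))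
    (g : (i : P.partsSet.filter Even) → Fin (P.mult i + 1)) {i : ℕ} (hi : Odd i) :
    2 * P.ciFun g i = P.mult i := by
  rw [ciFun, dif_neg fun h => Nat.not_even_iff_odd.mpr hi (mem_filter.mp h).2]
  exact Nat.two_mul_div_two_of_even (hmult i hi)

end PartitionData

namespace SYD

variable {P : PartitionData} {p : ℕ}

def isCIEquiv (hn : P.boxSum = p + p) (hmult : ∀ i, Odd i → Even (P.mult i)) :
    {T : SYD P p p // T.IsCI} ≃ ((i : P.partsSet.filter Even) → Fin (P.mult i + 1)) where
  toFun T i := ⟨T.1.f i, Nat.lt_succ_of_le (T.1.le_mult i)⟩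
  invFun g :=
    have hodd := fun i => P.two_mul_ciFun_of_odd hmult g (i := i)
    have hcount := P.plusCount_eq_minusCount hodd
    have htotal := P.plusCount_add_minusCount (P.ciFun_le_mult g)
    ⟨⟨P.ciFun g, P.ciFun_le_mult g, show P.plusCount _ = p by omega,
      show P.minusCount _ = p by omega⟩, rfl, hodd⟩
  left_inv T := by
    ext i
    dsimp only [ciFun]
    split_ifs with hi
    · rfl
    rcases Nat.even_or_odd i with he | ho
    · have := P.mult_eq_zero_of_notMem fun hmem => hi (mem_filter.mpr ⟨hmem, he⟩)
      have := T.1.le_mult i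
      omega
    · have := T.2.2 i ho
      omega
  right_inv g := funext fun i => Fin.ext (dif_pos i.2)

lemma card_isCI (hn : P.boxSum = p + p) (hmult : ∀ i, Odd i → Even (P.mult i)) :
    Nat.card {T : SYD P p p // T.IsCI} = ∏ i ∈ P.partsSet.filter Even, (P.mult i + 1) := by
  rw [Nat.card_congr (isCIEquiv hn hmult), Nat.card_pi]
  simp only [Nat.card_eq_fintype_card, Fintype.card_fin]
  exact prod_coe_sort _ fun i => P.mult i + 1

end SYD

namespace PartitionData

variable {P : PartitionData} {m : ℕ} {k : ℕ → ℕ}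

lemma notMem_colSet_of_lt_of_lt (hkmono : StrictMonoOn k (Set.Icc 0 m))
    (hkim : (Icc 1 m).image k = colSet P) {s c : ℕ} (hs : s ≤ m) (hlo : k (s - 1) < c)
    (hhi : c < k s) : c ∉ colSet P := by
  rw [← hkim]
  rintro hc
  obtain ⟨t, ht, rfl⟩ := mem_image.mp hc
  rw [mem_Icc] at ht
  have hIcc {u : ℕ} (hu : u ≤ m) : u ∈ Set.Icc 0 m := ⟨Nat.zero_le u, hu⟩
  rw [hkmono.lt_iff_lt (hIcc (by omega)) (hIcc ht.2)] at hlo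
  rw [hkmono.lt_iff_lt (hIcc ht.2) (hIcc hs)] at hhi
  omega

lemma mult_l_eq_sub (hk0 : k 0 = 0) (hkmono : StrictMonoOn k (Set.Icc 0 m))
    (hkim : (Icc 1 m).image k = colSet P) {s : ℕ} (hs : s ∈ Icc 1 m) :
    P.mult (P.l (k s)) = k s - k (s - 1) := by
  rw [mem_Icc] at hs
  have hcol {t : ℕ} (ht : t ∈ Icc 1 m) : k t ∈ colSet P := hkim ▸ mem_image_of_mem k ht
  have hks := hcol (mem_Icc.mpr hs)
  obtain ⟨-, hksl, -⟩ := mem_colSet.mp hks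
  have hlt : k (s - 1) < k s := hkmono ⟨Nat.zero_le _, by omega⟩ ⟨Nat.zero_le _, hs.2⟩ (by omega)
  suffices (Icc 1 P.len).filter (P.l · = P.l (k s)) = Ioc (k (s - 1)) (k s) by
    rw [mult, this, Nat.card_Ioc]
  ext j
  simp only [mem_filter, mem_Icc, mem_Ioc]
  constructor
  · rintro ⟨⟨hj1, -⟩, hj⟩
    refine ⟨?_, not_lt.mp fun h => (l_lt_of_mem_colSet hks h).ne hj⟩
    by_contra! hle
    obtain hs1 | hs1 := Nat.lt_or_ge 1 s
    · have hprev := hcol (mem_Icc.mpr ⟨(by omega : 1 ≤ s - 1), (by omega : s - 1 ≤ m)⟩)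
      have := P.l_antitoneOn (show 1 ≤ j from hj1) (show 1 ≤ k (s - 1) by omega) hle
      have := l_lt_of_mem_colSet hprev hlt
      omega
    · rw [show s - 1 = 0 by omega, hk0] at hle
      omega
  · rintro ⟨hlo, hhi⟩
    refine ⟨⟨by omega, by omega⟩, (P.l_eq_of_forall_notMem_colSet (by omega) hhi hksl ?_).symm⟩
    exact fun c hc hcs => notMem_colSet_of_lt_of_lt hkmono hkim hs.2 (by omega) hcs

lemma prod_mult_add_one_eq_prod_columns (hk0 : k 0 = 0) (hkmono : StrictMonoOn k (Set.Icc 0 m))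
    (hkim : (Icc 1 m).image k = colSet P) :
    ∏ i ∈ P.partsSet.filter Even, (P.mult i + 1) =
      ∏ s ∈ (Icc 1 m).filter (fun s => Even (P.l (k s))), (1 + (k s - k (s - 1))) := by
  have himage : (Icc 1 m).image (fun s => P.l (k s)) = P.partsSet := by
    rw [← image_l_colSet, ← hkim, image_image]; rfl
  have hinj : Set.InjOn (fun s => P.l (k s)) (Icc 1 m) := by
    refine injOn_l_colSet.comp (hkmono.injOn.mono fun s hs => ?_) fun s hs => ?_
    · exact ⟨Nat.zero_le s, (mem_Icc.mp hs).2⟩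
    · exact hkim ▸ mem_image_of_mem k hs
  rw [← himage, filter_image, prod_image (hinj.mono (filter_subset _ _))]
  refine prod_congr rfl fun s hs => ?_
  rw [mult_l_eq_sub hk0 hkmono hkim (mem_filter.mp hs).1, add_comm]

end PartitionData

/-- Type CI: for `λ` a partition of `2p` with every odd part of even
multiplicity and with distinct column lengths `0 = k_0 < k_1 < ⋯ < k_m`, the
graph `Γ_CI(λ;p,p)` has no edges, so its number of connected components equals
`#syd_CI(λ;p,p)`, which is `∏_{s : λ_{k_s} even} (1 + k_s - k_{s-1})`. -/
theorem stmt16 (P : PartitionData) (p m : ℕ) (k : ℕ → ℕ)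
    (hn : P.boxSum = p + p)
    (hmult : ∀ i, Odd i → Even (P.mult i))
    (hdist : ∀ j, 1 ≤ j → P.l j - P.l (j + 1) ≤ 1)
    (hk0 : k 0 = 0) (hkmono : StrictMonoOn k (Set.Icc 0 m))
    (hkim : (Finset.Icc 1 m).image k = colSet P) :
    orbitGraphX P p p 1 SYD.IsCI = ⊥ ∧
    Nat.card (orbitGraphX P p p 1 SYD.IsCI).ConnectedComponent =
      Nat.card {T : SYD P p p // T.IsCI} ∧
    Nat.card {T : SYD P p p // T.IsCI} =
      ∏ s ∈ (Finset.Icc 1 m).filter (fun s => Even (P.l (k s))),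
        (1 + (k s - k (s - 1))) := by
  have hbot := orbitGraphX_isCI_eq_bot (p := p) (q := p) hdist one_ne_zero
  refine ⟨hbot, by rw [hbot, SimpleGraph.card_connectedComponent_bot], ?_⟩
  rw [SYD.card_isCI hn hmult, prod_mult_add_one_eq_prod_columns hk0 hkmono hkim]
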